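/- arXiv:2406.14506 — 3 statements merged into one kernel-verified Lean document; each statement's English description precedes it below -/
import Mathlib

section
/- Fix k ∈ ℕ, α ∈ (0,1), and ε, x̄ ∈ [0,1]. For any nonnegative reals x₁,…,x_k with Σᵢ xᵢ = x̄ and αx̄ < 1, we have ∏_{i=1}^k (1 + ε·α·xᵢ/(1 - α·Σ_{j≤i} x_j)) ≤ 1 + ε·α·x̄/(1 - α·x̄). -/
/-!
With `S` the partial sum before step `i`, the factors telescope through
`(1 + εαS/(1 - αS)) (1 + εαxᵢ/(1 - α(S + xᵢ))) ≤ 1 + εα(S + xᵢ)/(1 - α(S + xᵢ))`,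
whose slack after clearing denominators is `ε(1 - ε)(αS)(αxᵢ) ≥ 0`.
-/

open Finset

variable {α ε : ℝ}

theorem one_add_div_mul_one_add_div_le (hε₀ : 0 ≤ ε) (hε₁ : ε ≤ 1) (hα : 0 ≤ α) {S t : ℝ}
    (hS : 0 ≤ S) (ht : 0 ≤ t) (h : α * (S + t) < 1) :
    (1 + ε * α * S / (1 - α * S)) * (1 + ε * α * t / (1 - α * (S + t)))
      ≤ 1 + ε * α * (S + t) / (1 - α * (S + t)) := by
  have hD : 0 < 1 - α * (S + t) := by linarith
  have hD' : 0 < 1 - α * S := by nlinarith [mul_nonneg hα ht]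
  rw [← sub_nonneg]
  have key : (1 + ε * α * (S + t) / (1 - α * (S + t)))
      - (1 + ε * α * S / (1 - α * S)) * (1 + ε * α * t / (1 - α * (S + t)))
      = ε * (1 - ε) * (α * S) * (α * t) / ((1 - α * S) * (1 - α * (S + t))) := by
    field_simp
    ring
  rw [key]
  have := mul_nonneg hα hS
  have := mul_nonneg hα ht
  have : 0 ≤ 1 - ε := by linarith
  positivity

theorem prod_one_add_div_partialSum_le (hε₀ : 0 ≤ ε) (hε₁ : ε ≤ 1) (hα : 0 ≤ α) :
    ∀ {n : ℕ} (x : Fin n → ℝ), (∀ i, 0 ≤ x i) → α * ∑ i, x i < 1 →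
      ∏ i, (1 + ε * α * x i / (1 - α * ∑ j ∈ Iic i, x j))
        ≤ 1 + ε * α * (∑ i, x i) / (1 - α * ∑ i, x i)
  | 0, _, _, _ => by simp
  | n + 1, x, hx, h => by
    have hlast : ∑ j ∈ Iic (Fin.last n), x j = ∑ i, x (Fin.castSucc i) + x (Fin.last n) := by
      rw [show Iic (Fin.last n) = univ from Iic_top, Fin.sum_univ_castSucc]
    have hS : 0 ≤ ∑ i, x (Fin.castSucc i) := sum_nonneg fun i _ => hx _
    have hD : 0 < 1 - α * (∑ i, x (Fin.castSucc i) + x (Fin.last n)) := by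
      rw [← Fin.sum_univ_castSucc]; linarith
    have ih := prod_one_add_div_partialSum_le hε₀ hε₁ hα (fun i => x (Fin.castSucc i))
      (fun i => hx _) (by nlinarith [mul_nonneg hα (hx (Fin.last n))])
    have hfactor :
        0 ≤ 1 + ε * α * x (Fin.last n) / (1 - α * (∑ i, x (Fin.castSucc i) + x (Fin.last n))) := by
      have := hx (Fin.last n)
      exact add_nonneg zero_le_one (div_nonneg (by positivity) hD.le)
    rw [Fin.prod_univ_castSucc, Fin.sum_univ_castSucc, hlast]
    simp only [Fin.sum_Iic_castSucc]
    exact (mul_le_mul_of_nonneg_right ih hfactor).trans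
      (one_add_div_mul_one_add_div_le hε₀ hε₁ hα hS (hx _) (by linarith))

theorem product_upper_bound_general (k : ℕ) (α ε xbar : ℝ)
    (hα : α ∈ Set.Ioo (0:ℝ) 1) (hε : ε ∈ Set.Icc (0:ℝ) 1)
    (x : Fin k → ℝ) (hx : ∀ i, 0 ≤ x i) (hsum : ∑ i, x i = xbar)
    (hdenom : α * xbar < 1) :
    ∏ i : Fin k, (1 + ε * α * x i / (1 - α * ∑ j ∈ Finset.Iic i, x j))
      ≤ 1 + ε * α * xbar / (1 - α * xbar) := by
  subst hsum
  exact prod_one_add_div_partialSum_le hε.1 hε.2 hα.1.le x hx hdenom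

theorem product_upper_bound (k : ℕ) (α ε xbar : ℝ)
    (hα : α ∈ Set.Ioo (0:ℝ) 1) (hε : ε ∈ Set.Icc (0:ℝ) 1) (hxbar : xbar ∈ Set.Icc (0:ℝ) 1)
    (x : Fin k → ℝ) (hx : ∀ i, 0 ≤ x i) (hsum : ∑ i, x i = xbar)
    (hdenom : α * xbar < 1) :
    ∏ i : Fin k, (1 + ε * α * x i / (1 - α * ∑ j ∈ Finset.Iic i, x j))
      ≤ 1 + ε * α * xbar / (1 - α * xbar) :=
  product_upper_bound_general k α ε xbar hα hε x hx hsum hdenom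
end

section
/- Fix k ∈ ℕ, α ∈ (0,1), and ε, x̄ ∈ [0,1]. For any nonnegative reals x₁,…,x_k with Σᵢ xᵢ = x̄ and αx̄ < 1, we have ∏_{i=1}^k (1 - ε·α·xᵢ/(1 - α·Σ_{j≤i} x_j)) ≥ 1 - ε·α·x̄/(1 - α·x̄). -/
/-!
Write `f S = 1 - ε α S / (1 - α S)` and `P n` for the `n`-th partial product. A factor
`c = 1 - ε α x / (1 - α (S + x))` can be negative, so the bound `f S ≤ P` alone does not survive
multiplication by `c`; the two-sided invariant `f S ≤ P ≤ max 1 (-f S)` does. It propagates because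
of four elementary inequalities: `f (S + x) ≤ f S * c`, `c ≤ 1`, `f (S + x) ≤ min c (f S)`, and
`f S * c ≤ -f (S + x)` when `f S` and `c` are both negative.
-/

open Finset

lemma mul_mem_Icc_max_one_neg {a c t P : ℝ} (hac : t ≤ a * c) (hc : c ≤ 1) (htc : t ≤ c)
    (hta : t ≤ a) (hneg : a < 0 → c < 0 → a * c ≤ -t) (hP : P ∈ Set.Icc a (max 1 (-a))) :
    P * c ∈ Set.Icc t (max 1 (-t)) := by
  obtain ⟨haP, hPM⟩ := hP
  rcases le_or_gt 0 c with hc0 | hc0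
  · refine ⟨hac.trans (mul_le_mul_of_nonneg_right haP hc0), ?_⟩
    calc P * c ≤ max 1 (-a) * c := mul_le_mul_of_nonneg_right hPM hc0
      _ ≤ max 1 (-a) := mul_le_of_le_one_right (zero_le_one.trans (le_max_left _ _)) hc
      _ ≤ max 1 (-t) := max_le_max le_rfl (neg_le_neg hta)
  · constructor
    · have hMc := mul_le_mul_of_nonpos_right hPM hc0.le
      rcases le_total (-a) 1 with ha | ha
      · rw [max_eq_left ha] at hMc
        linarith
      · rw [max_eq_right ha] at hMc
        linarith [hneg (by linarith) hc0]
    · have hac' := mul_le_mul_of_nonpos_right haP hc0.le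
      rcases le_or_gt 0 a with ha | ha
      · linarith [mul_nonpos_of_nonneg_of_nonpos ha hc0.le, le_max_left 1 (-t)]
      · linarith [hneg ha hc0, le_max_right 1 (-t)]

-- `A = 1 - α S`, `B = 1 - α (S + x)`, `p = ε α S`, `q = ε α x`; the constraint `q ≤ A - B` is `ε ≤ 1`.
lemma mul_one_sub_div_mem_Icc {A B p q P : ℝ} (hB : 0 < B) (hp : 0 ≤ p) (hq : 0 ≤ q)
    (hqAB : q ≤ A - B) (hP : P ∈ Set.Icc (1 - p / A) (max 1 (-(1 - p / A)))) :
    P * (1 - q / B) ∈ Set.Icc (1 - (p + q) / B) (max 1 (-(1 - (p + q) / B))) := by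
  have hA : 0 < A := by linarith
  refine mul_mem_Icc_max_one_neg ?_ ?_ ?_ ?_ ?_ hP
  · have hdiff : (1 - p / A) * (1 - q / B) - (1 - (p + q) / B) = p * (A - B + q) / (A * B) := by
      field_simp
      ring
    have : 0 ≤ p * (A - B + q) / (A * B) :=
      div_nonneg (mul_nonneg hp (by linarith)) (mul_pos hA hB).le
    linarith
  · linarith [div_nonneg hq hB.le]
  · rw [add_div]
    linarith [div_nonneg hp hB.le]
  · rw [add_div]
    linarith [div_le_div_of_nonneg_left hp hB (by linarith : B ≤ A), div_nonneg hq hB.le]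
  · intro ha hc
    have hpA : A < p := by rwa [sub_neg, one_lt_div hA] at ha
    have hqB : B < q := by rwa [sub_neg, one_lt_div hB] at hc
    have hadd : (1 - p / A) * (1 - q / B) + (1 - (p + q) / B)
        = ((p - A) * (q - B - A) - A ^ 2 - A * (q - B)) / (A * B) := by
      field_simp
      ring
    have : ((p - A) * (q - B - A) - A ^ 2 - A * (q - B)) / (A * B) ≤ 0 :=
      div_nonpos_of_nonpos_of_nonneg
        (by nlinarith [mul_nonneg (sub_nonneg.2 hpA.le) (by linarith : 0 ≤ A + B - q)])
        (mul_pos hA hB).le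
    linarith

lemma prod_one_sub_div_partialSum_mem_Icc {ι : Type*} [LinearOrder ι] {α ε : ℝ} (hα : 0 ≤ α)
    (hε0 : 0 ≤ ε) (hε1 : ε ≤ 1) {x : ι → ℝ} (hx : ∀ i, 0 ≤ x i) (s : Finset ι)
    (hs : α * ∑ i ∈ s, x i < 1) :
    ∏ i ∈ s, (1 - ε * α * x i / (1 - α * ∑ j ∈ s with j ≤ i, x j)) ∈
      Set.Icc (1 - ε * α * (∑ i ∈ s, x i) / (1 - α * ∑ i ∈ s, x i))
        (max 1 (-(1 - ε * α * (∑ i ∈ s, x i) / (1 - α * ∑ i ∈ s, x i)))) := by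
  induction s using Finset.induction_on_max with
  | empty => simp
  | insert a s hlt ih =>
    have ha : a ∉ s := fun h => lt_irrefl a (hlt a h)
    have hfilter_a : {j ∈ insert a s | j ≤ a} = insert a s :=
      filter_true_of_mem fun j hj => (mem_insert.1 hj).elim le_of_eq fun h => (hlt j h).le
    have hfilter_s : ∀ i ∈ s, {j ∈ insert a s | j ≤ i} = {j ∈ s | j ≤ i} := fun i hi =>
      by rw [filter_insert, if_neg (hlt i hi).not_ge]
    rw [sum_insert ha] at hs ⊢
    rw [prod_insert ha, hfilter_a, sum_insert ha, prod_congr rfl fun i hi => by rw [hfilter_s i hi],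
      mul_comm (1 - ε * α * x a / _)]
    have hS : 0 ≤ ∑ i ∈ s, x i := sum_nonneg fun i _ => hx i
    have hsplit : ε * α * (x a + ∑ i ∈ s, x i) = ε * α * (∑ i ∈ s, x i) + ε * α * x a := by ring
    rw [hsplit]
    have hαxa : 0 ≤ α * x a := mul_nonneg hα (hx a)
    refine mul_one_sub_div_mem_Icc (by linarith) (mul_nonneg (mul_nonneg hε0 hα) hS)
      (mul_nonneg (mul_nonneg hε0 hα) (hx a)) ?_ (ih (by linarith))
    linarith [mul_le_mul_of_nonneg_right hε1 hαxa]

theorem product_lower_bound_general (k : ℕ) (α ε xbar : ℝ)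
    (hα : α ∈ Set.Ioo (0:ℝ) 1) (hε : ε ∈ Set.Icc (0:ℝ) 1)
    (x : Fin k → ℝ) (hx : ∀ i, 0 ≤ x i) (hsum : ∑ i, x i = xbar)
    (hdenom : α * xbar < 1) :
    ∏ i : Fin k, (1 - ε * α * x i / (1 - α * ∑ j ∈ Finset.Iic i, x j))
      ≥ 1 - ε * α * xbar / (1 - α * xbar) := by
  have h := (prod_one_sub_div_partialSum_mem_Icc hα.1.le hε.1 hε.2 hx univ
    (by rwa [hsum])).1
  simpa only [filter_ge_eq_Iic, hsum] using h

theorem product_lower_bound (k : ℕ) (α ε xbar : ℝ)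
    (hα : α ∈ Set.Ioo (0:ℝ) 1) (hε : ε ∈ Set.Icc (0:ℝ) 1) (hxbar : xbar ∈ Set.Icc (0:ℝ) 1)
    (x : Fin k → ℝ) (hx : ∀ i, 0 ≤ x i) (hsum : ∑ i, x i = xbar)
    (hdenom : α * xbar < 1) :
    ∏ i : Fin k, (1 - ε * α * x i / (1 - α * ∑ j ∈ Finset.Iic i, x j))
      ≥ 1 - ε * α * xbar / (1 - α * xbar) :=
  product_lower_bound_general k α ε xbar hα hε x hx hsum hdenom
end

section
/- The function q(x,y) = eˣ/(eˣ + eʸ - 1) on [0,1]² satisfies the integral equation q(x,y) = exp(-∫₀ʸ q(z,x) dz), the partial differential equations ∂q/∂y = -q(x,y)·q(y,x) and ∂q/∂x = q(x,y)(1 - q(x,y)), and the boundary conditions q(x,0) = 1 and q(0,y) = e^{-y}. -/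
/-! Since `z ↦ log (eᶻ + eˣ - 1)` is an antiderivative of `z ↦ q(z,x)` and equals `x` at `z = 0`,
the integral equation reduces to `exp (x - log (eʸ + eˣ - 1)) = q(x,y)`. The two partial
derivatives are the quotient rule, using that `q(x,y)` and `q(y,x)` share the denominator. -/

open Real

lemma exp_add_exp_sub_one_pos (z : ℝ) {x : ℝ} (hx : 0 ≤ x) : 0 < exp z + exp x - 1 := by
  have := one_le_exp hx
  have := exp_pos z
  linarith

lemma hasDerivAt_log_exp_add_exp_sub_one (z : ℝ) {x : ℝ} (hx : 0 ≤ x) :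
    HasDerivAt (fun z => log (exp z + exp x - 1)) (exp z / (exp z + exp x - 1)) z :=
  (((hasDerivAt_exp z).add_const _).sub_const 1).log (exp_add_exp_sub_one_pos z hx).ne'

lemma integral_exp_div_exp_add_exp_sub_one {x : ℝ} (hx : 0 ≤ x) (a b : ℝ) :
    ∫ z in a..b, exp z / (exp z + exp x - 1)
      = log (exp b + exp x - 1) - log (exp a + exp x - 1) := by
  refine intervalIntegral.integral_eq_sub_of_hasDerivAt
    (fun z _ => hasDerivAt_log_exp_add_exp_sub_one z hx) ?_
  refine (continuous_exp.div (by fun_prop) fun z => ?_).intervalIntegrable a b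
  exact (exp_add_exp_sub_one_pos z hx).ne'

lemma exp_div_eq_exp_neg_integral {x : ℝ} (hx : 0 ≤ x) (y : ℝ) :
    exp x / (exp x + exp y - 1) = exp (-∫ z in (0:ℝ)..y, exp z / (exp z + exp x - 1)) := by
  rw [integral_exp_div_exp_add_exp_sub_one hx, exp_zero, add_sub_cancel_left, log_exp, neg_sub,
    exp_sub, exp_log (exp_add_exp_sub_one_pos y hx), add_comm (exp y)]

lemma hasDerivAt_exp_div_exp_add_exp_sub_one_right {x y : ℝ} (h : exp x + exp y - 1 ≠ 0) :
    HasDerivAt (fun y' => exp x / (exp x + exp y' - 1))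
      (-(exp x / (exp x + exp y - 1) * (exp y / (exp y + exp x - 1)))) y := by
  refine ((hasDerivAt_const y (exp x)).div
    (((hasDerivAt_exp y).const_add _).sub_const 1) h).congr_deriv ?_
  rw [add_comm (exp y)]
  field_simp
  ring

lemma hasDerivAt_exp_div_exp_add_exp_sub_one_left {x y : ℝ} (h : exp x + exp y - 1 ≠ 0) :
    HasDerivAt (fun x' => exp x' / (exp x' + exp y - 1))
      (exp x / (exp x + exp y - 1) * (1 - exp x / (exp x + exp y - 1))) x := by
  refine ((hasDerivAt_exp x).div (((hasDerivAt_exp x).add_const _).sub_const 1) h).congr_deriv ?_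
  field_simp

/-- Properties of `q(x,y) = eˣ/(eˣ + eʸ - 1)` on `[0,1]²`: it satisfies the
integral equation `q(x,y) = exp(-∫₀ʸ q(z,x) dz)`, the partial differential
equations `∂q/∂y = -q(x,y)q(y,x)` and `∂q/∂x = q(x,y)(1-q(x,y))`, and the
boundary conditions `q(x,0) = 1` and `q(0,y) = e^{-y}`. -/
theorem q_two_var_properties :
    ∀ x ∈ Set.Icc (0:ℝ) 1, ∀ y ∈ Set.Icc (0:ℝ) 1,
      (Real.exp x / (Real.exp x + Real.exp y - 1)
        = Real.exp (-∫ z in (0:ℝ)..y, Real.exp z / (Real.exp z + Real.exp x - 1))) ∧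
      HasDerivAt (fun y' => Real.exp x / (Real.exp x + Real.exp y' - 1))
        (-(Real.exp x / (Real.exp x + Real.exp y - 1)
            * (Real.exp y / (Real.exp y + Real.exp x - 1)))) y ∧
      HasDerivAt (fun x' => Real.exp x' / (Real.exp x' + Real.exp y - 1))
        (Real.exp x / (Real.exp x + Real.exp y - 1)
          * (1 - Real.exp x / (Real.exp x + Real.exp y - 1))) x ∧
      Real.exp x / (Real.exp x + Real.exp 0 - 1) = 1 ∧
      Real.exp 0 / (Real.exp 0 + Real.exp y - 1) = Real.exp (-y) := by
  intro x hx y hy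
  have hD : exp x + exp y - 1 ≠ 0 := (exp_add_exp_sub_one_pos x hy.1).ne'
  refine ⟨exp_div_eq_exp_neg_integral hx.1 y, hasDerivAt_exp_div_exp_add_exp_sub_one_right hD,
    hasDerivAt_exp_div_exp_add_exp_sub_one_left hD, ?_, ?_⟩
  · simp [exp_ne_zero]
  · simp [exp_neg]
end
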